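/- (Global convergence of natural policy gradient in the tabular case) Consider a finite discounted MDP and the iteration π^{(t+1)}(a|s) = π^{(t)}(a|s) · exp(η A^{(t)}(s,a)/(1−γ)) / Z_t(s), where A^{(t)} = A^{π^{(t)}}, Z_t(s) = Σ_{a′} π^{(t)}(a′|s) exp(η A^{(t)}(s,a′)/(1−γ)), and π^{(0)} is the uniform policy π^{(0)}(a|s) = 1/|A|. Then for every η > 0, every starting state distribution ρ, and every T ≥ 1: V^{π^{(T)}}(ρ) ≥ V^⋆(ρ) − log|A|/(η T) − 1/((1−γ)² T). In particular, if η ≥ (1−γ)² log|A| then V^⋆(ρ) − V^{π^{(T)}}(ρ) ≤ 2/((1−γ)² T), so T ≥ 2/((1−γ)² ε) iterations suffice for an ε-optimal policy. -/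

import Mathlib

open scoped BigOperators InnerProductSpace

/-- A finite Markov decision process (the data only: transition probabilities `P`,
rewards `r`, and discount factor `γ`). -/
structure FinMDP where
  S : Type
  A : Type
  [fS : Fintype S]
  [dS : DecidableEq S]
  [fA : Fintype A]
  [dA : DecidableEq A]
  P : S → A → S → ℝ
  r : S → A → ℝ
  γ : ℝ

attribute [instance] FinMDP.fS FinMDP.dS FinMDP.fA FinMDP.dA

/-- `μ` is a probability distribution on the finite type `X`. -/
def IsDist {X : Type*} [Fintype X] (μ : X → ℝ) : Prop :=
  (∀ x, 0 ≤ μ x) ∧ ∑ x, μ x = 1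

namespace FinMDP

variable (M : FinMDP)

/-- The MDP data is well formed: `P` is a transition kernel, rewards lie in `[0,1]`,
and `γ ∈ [0,1)`. -/
def Valid : Prop :=
  (∀ s a s', 0 ≤ M.P s a s') ∧ (∀ s a, ∑ s', M.P s a s' = 1) ∧
    (∀ s a, 0 ≤ M.r s a ∧ M.r s a ≤ 1) ∧ 0 ≤ M.γ ∧ M.γ < 1

/-- `π` is a stochastic policy: `π s a` is the probability `π(a|s)`. -/
def IsPolicy (π : M.S → M.A → ℝ) : Prop :=
  (∀ s a, 0 ≤ π s a) ∧ ∀ s, ∑ a, π s a = 1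

/-- State-to-state transition matrix induced by a policy. -/
noncomputable def Pmat (π : M.S → M.A → ℝ) : Matrix M.S M.S ℝ :=
  Matrix.of fun s s' => ∑ a, π s a * M.P s a s'

/-- Expected one-step reward under a policy. -/
noncomputable def rPol (π : M.S → M.A → ℝ) (s : M.S) : ℝ :=
  ∑ a, π s a * M.r s a

/-- The value function `V^π(s₀) = E[∑ₜ γ^t r(s_t, a_t)]`. -/
noncomputable def V (π : M.S → M.A → ℝ) (s₀ : M.S) : ℝ :=
  ∑' t : ℕ, M.γ ^ t * ((M.Pmat π ^ t).mulVec (M.rPol π)) s₀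

/-- `V^π(ρ)` for a starting state distribution `ρ`. -/
noncomputable def Vd (π : M.S → M.A → ℝ) (ρ : M.S → ℝ) : ℝ :=
  ∑ s, ρ s * M.V π s

/-- The action-value function `Q^π(s,a)`. -/
noncomputable def Qf (π : M.S → M.A → ℝ) (s : M.S) (a : M.A) : ℝ :=
  M.r s a + M.γ * ∑ s', M.P s a s' * M.V π s'

/-- The advantage function `A^π(s,a) = Q^π(s,a) - V^π(s)`. -/
noncomputable def Adv (π : M.S → M.A → ℝ) (s : M.S) (a : M.A) : ℝ :=
  M.Qf π s a - M.V π s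

/-- Discounted state visitation distribution `d^π_{s₀}(s)`. -/
noncomputable def dvisit (π : M.S → M.A → ℝ) (s₀ s : M.S) : ℝ :=
  (1 - M.γ) * ∑' t : ℕ, M.γ ^ t * (M.Pmat π ^ t) s₀ s

/-- Discounted state visitation distribution `d^π_μ(s)` for a starting distribution `μ`. -/
noncomputable def dvisitD (π : M.S → M.A → ℝ) (μ : M.S → ℝ) (s : M.S) : ℝ :=
  ∑ s₀, μ s₀ * M.dvisit π s₀ s

/-- State-action transition matrix induced by a policy. -/
noncomputable def PmatSA (π : M.S → M.A → ℝ) :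
    Matrix (M.S × M.A) (M.S × M.A) ℝ :=
  Matrix.of fun p q => M.P p.1 p.2 q.1 * π q.1 q.2

/-- Discounted state-action visitation measure `d^π_ν(s,a)` started from `(s₀,a₀) ∼ ν`,
executing `a₀` first and following `π` thereafter. -/
noncomputable def dvisitSA (π : M.S → M.A → ℝ) (ν : M.S × M.A → ℝ)
    (p : M.S × M.A) : ℝ :=
  (1 - M.γ) * ∑' t : ℕ, M.γ ^ t * ∑ p₀, ν p₀ * (M.PmatSA π ^ t) p₀ p

/-- The softmax policy `π_θ(a|s) = exp(θ_{s,a}) / ∑_{a'} exp(θ_{s,a'})`. -/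
noncomputable def softmaxPolicy (θ : EuclideanSpace ℝ (M.S × M.A)) :
    M.S → M.A → ℝ :=
  fun s a => Real.exp (θ (s, a)) / ∑ a', Real.exp (θ (s, a'))

end FinMDP

/-!
Natural policy gradient for softmax policies is mirror descent with the KL divergence, run
independently in every state. Fix a comparator policy `p` with discounted visitation distribution
`d`. The performance difference lemma writes `(1 - γ) (V^p(ρ) - V^{π_t}(ρ))` as the `d`-average of
the advantage of `π_t` under `p`, and the multiplicative form of the update turns this advantage
into `(1 - γ)/η · (KL(p ‖ π_t) - KL(p ‖ π_{t+1}) + log Z_t)`. Since `π_t` has zero mean advantage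
under itself, `log Z_t ≥ 0`; applying the same identity with `p = π_{t+1}` and the performance
difference lemma once more bounds `(1 - γ)/η · log Z_t` by the improvement `V^{π_{t+1}} - V^{π_t}`,
so the values increase. Summed over `t < T`, the KL terms telescope to at most `log |A|` (the
iteration starts from the uniform policy) and the value terms to at most `1/(1 - γ)`, while
monotonicity bounds `T` times the last gap by the sum of the gaps.
-/

open Finset Matrix

namespace Matrix

variable {n : Type*} [Fintype n] [DecidableEq n] {P : Matrix n n ℝ} {γ : ℝ}

lemma mulVec_le_of_mem_rowStochastic (hP : P ∈ rowStochastic ℝ n) {v : n → ℝ} {c : ℝ}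
    (hv : ∀ j, v j ≤ c) (i : n) : (P *ᵥ v) i ≤ c :=
  calc (P *ᵥ v) i = ∑ j, P i j * v j := rfl
    _ ≤ ∑ j, P i j * c :=
      sum_le_sum fun j _ => mul_le_mul_of_nonneg_left (hv j) (nonneg_of_mem_rowStochastic hP)
    _ = c := by rw [← sum_mul, sum_row_of_mem_rowStochastic hP, one_mul]

lemma abs_mulVec_le_of_mem_rowStochastic (hP : P ∈ rowStochastic ℝ n) {v : n → ℝ} {c : ℝ}
    (hv : ∀ j, |v j| ≤ c) (i : n) : |(P *ᵥ v) i| ≤ c := by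
  have hneg := mulVec_le_of_mem_rowStochastic hP (v := -v) (fun j => neg_le.1 (abs_le.1 (hv j)).1) i
  rw [mulVec_neg, Pi.neg_apply] at hneg
  exact abs_le.2 ⟨neg_le.1 hneg, mulVec_le_of_mem_rowStochastic hP (fun j => le_of_abs_le (hv j)) i⟩

lemma summable_pow_mulVec (hP : P ∈ rowStochastic ℝ n) (hγ₀ : 0 ≤ γ) (hγ₁ : γ < 1)
    (v : n → ℝ) (i : n) : Summable fun t : ℕ => γ ^ t * (P ^ t *ᵥ v) i := by
  refine .of_norm_bounded ((summable_geometric_of_lt_one hγ₀ hγ₁).mul_left (∑ j, |v j|))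
    fun t => ?_
  have hv : ∀ j, |v j| ≤ ∑ k, |v k| := fun j =>
    single_le_sum (f := fun k => |v k|) (fun k _ => abs_nonneg _) (mem_univ j)
  rw [Real.norm_eq_abs, abs_mul, abs_of_nonneg (pow_nonneg hγ₀ t), mul_comm]
  exact mul_le_mul_of_nonneg_right
    (abs_mulVec_le_of_mem_rowStochastic (pow_mem hP t) hv i) (pow_nonneg hγ₀ t)

lemma summable_pow_apply (hP : P ∈ rowStochastic ℝ n) (hγ₀ : 0 ≤ γ) (hγ₁ : γ < 1)
    (i j : n) : Summable fun t : ℕ => γ ^ t * (P ^ t) i j := by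
  simpa [mulVec_single_one] using summable_pow_mulVec hP hγ₀ hγ₁ (Pi.single j 1) i

lemma tsum_pow_mulVec_eq_add (hP : P ∈ rowStochastic ℝ n) (hγ₀ : 0 ≤ γ) (hγ₁ : γ < 1)
    (v : n → ℝ) (i : n) :
    ∑' t : ℕ, γ ^ t * (P ^ t *ᵥ v) i =
      v i + γ * (P *ᵥ fun j => ∑' t : ℕ, γ ^ t * (P ^ t *ᵥ v) j) i := by
  have hsum := summable_pow_mulVec hP hγ₀ hγ₁ v
  have hshift : ∀ t : ℕ, γ ^ (t + 1) * (P ^ (t + 1) *ᵥ v) i =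
      ∑ j, γ * (P i j * (γ ^ t * (P ^ t *ᵥ v) j)) := by
    intro t
    rw [pow_succ' P, ← mulVec_mulVec, pow_succ']
    change γ * γ ^ t * ∑ j, P i j * (P ^ t *ᵥ v) j = _
    rw [mul_sum]
    exact sum_congr rfl fun j _ => by ring
  rw [(hsum i).tsum_eq_zero_add]
  simp_rw [hshift]
  rw [Summable.tsum_finsetSum fun j _ => ((hsum j).mul_left _).mul_left _]
  simp only [pow_zero, one_mul, one_mulVec, tsum_mul_left, ← mul_sum]
  rfl

lemma tsum_pow_mulVec_sub_smul_mulVec (hP : P ∈ rowStochastic ℝ n) (hγ₀ : 0 ≤ γ)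
    (hγ₁ : γ < 1) (w : n → ℝ) (i : n) :
    ∑' t : ℕ, γ ^ t * (P ^ t *ᵥ (w - γ • (P *ᵥ w))) i = w i := by
  set u : ℕ → ℝ := fun t => γ ^ t * (P ^ t *ᵥ w) i
  have hu : Summable u := summable_pow_mulVec hP hγ₀ hγ₁ w i
  have hterm : ∀ t, γ ^ t * (P ^ t *ᵥ (w - γ • (P *ᵥ w))) i = u t - u (t + 1) := by
    intro t
    simp only [u, mulVec_sub, mulVec_smul, mulVec_mulVec, Pi.sub_apply,
      Pi.smul_apply, smul_eq_mul, pow_succ]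
    rw [mul_sub, mul_assoc]
  simp_rw [hterm]
  rw [hu.tsum_sub ((summable_nat_add_iff 1).2 hu), hu.tsum_eq_zero_add]
  simp [u]

lemma tsum_pow_mulVec_eq_sum (hP : P ∈ rowStochastic ℝ n) (hγ₀ : 0 ≤ γ) (hγ₁ : γ < 1)
    (v : n → ℝ) (i : n) :
    ∑' t : ℕ, γ ^ t * (P ^ t *ᵥ v) i = ∑ j, (∑' t : ℕ, γ ^ t * (P ^ t) i j) * v j := by
  simp only [mulVec, dotProduct, mul_sum, ← mul_assoc]
  rw [Summable.tsum_finsetSum fun j _ => (summable_pow_apply hP hγ₀ hγ₁ i j).mul_right _]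
  simp only [tsum_mul_right]

lemma sum_tsum_pow_apply (hP : P ∈ rowStochastic ℝ n) (hγ₀ : 0 ≤ γ) (hγ₁ : γ < 1)
    (i : n) : ∑ j, ∑' t : ℕ, γ ^ t * (P ^ t) i j = (1 - γ)⁻¹ := by
  have h := tsum_pow_mulVec_eq_sum hP hγ₀ hγ₁ 1 i
  simp only [one_vecMul_of_mem_rowStochastic (pow_mem hP _), Pi.one_apply, mul_one] at h
  rw [← h, tsum_geometric_of_lt_one hγ₀ hγ₁]

end Matrix

section Distributions

variable {ι : Type*} [Fintype ι]

lemma IsDist.nonempty {p : ι → ℝ} (hp : IsDist p) : Nonempty ι := by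
  by_contra h
  simpa [not_nonempty_iff.1 h] using hp.2

lemma IsDist.sum_mul_le {p f : ι → ℝ} (hp : IsDist p) {c : ℝ} (hf : ∀ i, f i ≤ c) :
    ∑ i, p i * f i ≤ c :=
  calc ∑ i, p i * f i ≤ ∑ i, p i * c :=
        sum_le_sum fun i _ => mul_le_mul_of_nonneg_left (hf i) (hp.1 i)
    _ = c := by rw [← sum_mul, hp.2, one_mul]

noncomputable def discreteKL (p q : ι → ℝ) : ℝ :=
  ∑ i, p i * (Real.log (p i) - Real.log (q i))

@[simp]
lemma discreteKL_self (p : ι → ℝ) : discreteKL p p = 0 := by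
  simp [discreteKL]

lemma sub_le_mul_log_sub_log {p q : ℝ} (hp : 0 ≤ p) (hq : 0 < q) :
    p - q ≤ p * (Real.log p - Real.log q) := by
  rcases hp.eq_or_lt with rfl | hp
  · simpa using hq.le
  have h := Real.log_le_sub_one_of_pos (div_pos hq hp)
  rw [Real.log_div hq.ne' hp.ne'] at h
  have := mul_le_mul_of_nonneg_left h hp.le
  rw [mul_sub p (q / p), mul_div_cancel₀ _ hp.ne'] at this
  linarith

lemma discreteKL_nonneg {p q : ι → ℝ} (hp : IsDist p) (hq : ∑ i, q i = 1)
    (hq₀ : ∀ i, 0 < q i) : 0 ≤ discreteKL p q :=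
  calc (0 : ℝ) = ∑ i, (p i - q i) := by rw [sum_sub_distrib, hp.2, hq, sub_self]
    _ ≤ discreteKL p q := sum_le_sum fun i _ => sub_le_mul_log_sub_log (hp.1 i) (hq₀ i)

lemma discreteKL_uniform_le {p : ι → ℝ} (hp : IsDist p) :
    discreteKL p (fun _ => 1 / (Fintype.card ι : ℝ)) ≤ Real.log (Fintype.card ι) := by
  have hp₁ : ∀ i, p i ≤ 1 := fun i =>
    hp.2 ▸ single_le_sum (fun j _ => hp.1 j) (mem_univ i)
  have hent : 0 ≤ ∑ i, Real.negMulLog (p i) :=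
    sum_nonneg fun i _ => Real.negMulLog_nonneg (hp.1 i) (hp₁ i)
  have h : discreteKL p (fun _ => 1 / (Fintype.card ι : ℝ)) =
      Real.log (Fintype.card ι) - ∑ i, Real.negMulLog (p i) := by
    simp only [discreteKL, one_div, Real.log_inv, Real.negMulLog, sub_neg_eq_add, mul_add,
      sum_add_distrib, ← sum_mul, hp.2]
    simp only [neg_mul, sum_neg_distrib]
    ring
  linarith

lemma Antitone.natCast_mul_le_sub {a Φ : ℕ → ℝ} (ha : Antitone a)
    (h : ∀ t, a t ≤ Φ t - Φ (t + 1)) (T : ℕ) : T * a T ≤ Φ 0 - Φ T :=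
  calc T * a T = ∑ _t ∈ range T, a T := by simp
    _ ≤ ∑ t ∈ range T, a t := sum_le_sum fun t ht => ha (mem_range.1 ht).le
    _ ≤ ∑ t ∈ range T, (Φ t - Φ (t + 1)) := sum_le_sum fun t _ => h t
    _ = Φ 0 - Φ T := sum_range_sub' Φ T

end Distributions

namespace FinMDP

variable {M : FinMDP}

lemma Valid.gamma_nonneg (hM : M.Valid) : 0 ≤ M.γ := hM.2.2.2.1

lemma Valid.gamma_lt_one (hM : M.Valid) : M.γ < 1 := hM.2.2.2.2

lemma IsPolicy.nonempty_actions [Nonempty M.S] {π : M.S → M.A → ℝ} (hπ : M.IsPolicy π) :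
    Nonempty M.A :=
  IsDist.nonempty (p := π (Classical.arbitrary _)) ⟨hπ.1 _, hπ.2 _⟩

lemma pmat_mem_rowStochastic (hM : M.Valid) {π : M.S → M.A → ℝ} (hπ : M.IsPolicy π) :
    M.Pmat π ∈ rowStochastic ℝ M.S := by
  refine mem_rowStochastic_iff_sum.2
    ⟨fun s s' => sum_nonneg fun a _ => mul_nonneg (hπ.1 s a) (hM.1 s a s'), fun s => ?_⟩
  simp only [Pmat, of_apply]
  rw [sum_comm]
  simp [← mul_sum, hM.2.1, hπ.2 s]

lemma rPol_nonneg (hM : M.Valid) {π : M.S → M.A → ℝ} (hπ : ∀ s a, 0 ≤ π s a) (s : M.S) :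
    0 ≤ M.rPol π s :=
  sum_nonneg fun a _ => mul_nonneg (hπ s a) (hM.2.2.1 s a).1

lemma rPol_le_one (hM : M.Valid) {π : M.S → M.A → ℝ} (hπ : M.IsPolicy π) (s : M.S) :
    M.rPol π s ≤ 1 :=
  IsDist.sum_mul_le ⟨hπ.1 s, hπ.2 s⟩ fun a => (hM.2.2.1 s a).2

lemma pow_pmat_mulVec_rPol_nonneg (hM : M.Valid) {π : M.S → M.A → ℝ}
    (hπ : ∀ s a, 0 ≤ π s a) (t : ℕ) (s : M.S) : 0 ≤ (M.Pmat π ^ t *ᵥ M.rPol π) s := by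
  induction t generalizing s with
  | zero => simpa using rPol_nonneg hM hπ s
  | succ t ih =>
    rw [pow_succ', ← mulVec_mulVec]
    exact sum_nonneg fun s' _ =>
      mul_nonneg (sum_nonneg fun a _ => mul_nonneg (hπ s a) (hM.1 s a s')) (ih s')

lemma V_nonneg (hM : M.Valid) {π : M.S → M.A → ℝ} (hπ : ∀ s a, 0 ≤ π s a) (s : M.S) :
    0 ≤ M.V π s :=
  tsum_nonneg fun t =>
    mul_nonneg (pow_nonneg hM.gamma_nonneg t) (pow_pmat_mulVec_rPol_nonneg hM hπ t s)

lemma V_le_inv_one_sub (hM : M.Valid) {π : M.S → M.A → ℝ} (hπ : M.IsPolicy π) (s : M.S) :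
    M.V π s ≤ (1 - M.γ)⁻¹ := by
  have hP := pmat_mem_rowStochastic hM hπ
  rw [← tsum_geometric_of_lt_one hM.gamma_nonneg hM.gamma_lt_one]
  refine Summable.tsum_le_tsum (fun t => mul_le_of_le_one_right (pow_nonneg hM.gamma_nonneg t)
      (mulVec_le_of_mem_rowStochastic (pow_mem hP t) (rPol_le_one hM hπ) s))
    (summable_pow_mulVec hP hM.gamma_nonneg hM.gamma_lt_one _ s)
    (summable_geometric_of_lt_one hM.gamma_nonneg hM.gamma_lt_one)

lemma V_eq_rPol_add (hM : M.Valid) {π : M.S → M.A → ℝ} (hπ : M.IsPolicy π) (s : M.S) :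
    M.V π s = M.rPol π s + M.γ * (M.Pmat π *ᵥ M.V π) s :=
  tsum_pow_mulVec_eq_add (pmat_mem_rowStochastic hM hπ) hM.gamma_nonneg hM.gamma_lt_one _ s

noncomputable def advPol (π' π : M.S → M.A → ℝ) (s : M.S) : ℝ :=
  ∑ a, π' s a * M.Adv π s a

lemma advPol_eq {π' π : M.S → M.A → ℝ} {s : M.S} (hπ' : ∑ a, π' s a = 1) :
    M.advPol π' π s = M.rPol π' s + M.γ * (M.Pmat π' *ᵥ M.V π) s - M.V π s := by
  have hPV : (M.Pmat π' *ᵥ M.V π) s = ∑ a, π' s a * ∑ s', M.P s a s' * M.V π s' := by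
    simp only [mulVec, dotProduct, Pmat, of_apply, sum_mul, mul_sum, mul_assoc]
    exact sum_comm
  rw [hPV, advPol, rPol, mul_sum, ← sum_add_distrib, ← one_mul (M.V π s), ← hπ', sum_mul,
    ← sum_sub_distrib]
  exact sum_congr rfl fun a _ => by simp only [Adv, Qf]; ring

lemma advPol_self (hM : M.Valid) {π : M.S → M.A → ℝ} (hπ : M.IsPolicy π) (s : M.S) :
    M.advPol π π s = 0 := by
  rw [advPol_eq (hπ.2 s)]
  linarith [V_eq_rPol_add hM hπ s]

lemma tsum_pow_mulVec_advPol (hM : M.Valid) {π' : M.S → M.A → ℝ} (hπ' : M.IsPolicy π')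
    (π : M.S → M.A → ℝ) (s₀ : M.S) :
    ∑' t : ℕ, M.γ ^ t * (M.Pmat π' ^ t *ᵥ M.advPol π' π) s₀ = M.V π' s₀ - M.V π s₀ := by
  have h : M.advPol π' π = (M.V π' - M.V π) - M.γ • (M.Pmat π' *ᵥ (M.V π' - M.V π)) := by
    funext s
    rw [advPol_eq (hπ'.2 s)]
    simp only [Pi.sub_apply, Pi.smul_apply, smul_eq_mul, mulVec_sub]
    linarith [V_eq_rPol_add hM hπ' s]
  rw [h]
  exact tsum_pow_mulVec_sub_smul_mulVec (pmat_mem_rowStochastic hM hπ') hM.gamma_nonneg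
    hM.gamma_lt_one _ s₀

lemma advPol_le_V_sub_V (hM : M.Valid) {π' π : M.S → M.A → ℝ} (hπ' : M.IsPolicy π')
    (hf : ∀ s, 0 ≤ M.advPol π' π s) (s₀ : M.S) :
    M.advPol π' π s₀ ≤ M.V π' s₀ - M.V π s₀ := by
  have hP := pmat_mem_rowStochastic hM hπ'
  rw [← tsum_pow_mulVec_advPol hM hπ' π s₀]
  simpa using (summable_pow_mulVec hP hM.gamma_nonneg hM.gamma_lt_one _ s₀).le_tsum 0
    fun t _ => mul_nonneg (pow_nonneg hM.gamma_nonneg t)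
      (nonneg_mulVec_of_mem_rowStochastic (pow_mem hP t) hf s₀)

/-- Performance difference lemma. -/
lemma one_sub_gamma_mul_Vd_sub_Vd (hM : M.Valid) {p : M.S → M.A → ℝ} (hp : M.IsPolicy p)
    (π : M.S → M.A → ℝ) (ρ : M.S → ℝ) :
    (1 - M.γ) * (M.Vd p ρ - M.Vd π ρ) = ∑ s, M.dvisitD p ρ s * M.advPol p π s := by
  have h : ∀ s₀, M.V p s₀ - M.V π s₀ =
      ∑ s, (∑' t : ℕ, M.γ ^ t * (M.Pmat p ^ t) s₀ s) * M.advPol p π s := fun s₀ => by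
    rw [← tsum_pow_mulVec_advPol hM hp π s₀, tsum_pow_mulVec_eq_sum
      (pmat_mem_rowStochastic hM hp) hM.gamma_nonneg hM.gamma_lt_one]
  simp only [Vd, dvisitD, dvisit, ← sum_sub_distrib, ← mul_sub, h, mul_sum, sum_mul]
  rw [sum_comm]
  exact sum_congr rfl fun s _ => sum_congr rfl fun s₀ _ => by ring

lemma isDist_dvisitD (hM : M.Valid) {p : M.S → M.A → ℝ} (hp : M.IsPolicy p) {ρ : M.S → ℝ}
    (hρ : IsDist ρ) : IsDist (M.dvisitD p ρ) := by
  have hP := pmat_mem_rowStochastic hM hp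
  have hγ : 0 < 1 - M.γ := sub_pos.2 hM.gamma_lt_one
  refine ⟨fun s => sum_nonneg fun s₀ _ => mul_nonneg (hρ.1 s₀) (mul_nonneg hγ.le
    (tsum_nonneg fun t => mul_nonneg (pow_nonneg hM.gamma_nonneg t)
      (nonneg_of_mem_rowStochastic (pow_mem hP t)))), ?_⟩
  simp only [dvisitD, dvisit]
  rw [sum_comm]
  simp only [← mul_sum, sum_tsum_pow_apply hP hM.gamma_nonneg hM.gamma_lt_one,
    mul_inv_cancel₀ hγ.ne', mul_one, hρ.2]

section NPGStep

noncomputable def npgNormalizer (η : ℝ) (π : M.S → M.A → ℝ) (s : M.S) : ℝ :=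
  ∑ a, π s a * Real.exp (η * M.Adv π s a / (1 - M.γ))

/-- Natural policy gradient for the softmax parametrization, written in policy space. -/
noncomputable def npgUpdate (η : ℝ) (π : M.S → M.A → ℝ) : M.S → M.A → ℝ :=
  fun s a => π s a * Real.exp (η * M.Adv π s a / (1 - M.γ)) / M.npgNormalizer η π s

variable {η : ℝ} {π : M.S → M.A → ℝ}

lemma npgNormalizer_pos [Nonempty M.A] {s : M.S} (hpos : ∀ a, 0 < π s a) :
    0 < M.npgNormalizer η π s :=
  sum_pos (fun a _ => mul_pos (hpos a) (Real.exp_pos _)) univ_nonempty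

lemma npgUpdate_pos {s : M.S} (hpos : ∀ a, 0 < π s a) (a : M.A) :
    0 < M.npgUpdate η π s a :=
  have : Nonempty M.A := ⟨a⟩
  div_pos (mul_pos (hpos a) (Real.exp_pos _)) (npgNormalizer_pos hpos)

lemma isPolicy_npgUpdate (hπ : M.IsPolicy π) (hpos : ∀ s a, 0 < π s a) :
    M.IsPolicy (M.npgUpdate η π) := by
  refine ⟨fun s a => (npgUpdate_pos (hpos s) a).le, fun s => ?_⟩
  have : Nonempty M.A := IsDist.nonempty ⟨hπ.1 s, hπ.2 s⟩
  simp only [npgUpdate]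
  rw [← sum_div]
  exact div_self (npgNormalizer_pos (hpos s)).ne'

/-- `π` has zero mean advantage under itself, and `exp x ≥ 1 + x`. -/
lemma one_le_npgNormalizer (hM : M.Valid) (hπ : M.IsPolicy π) (s : M.S) :
    1 ≤ M.npgNormalizer η π s := by
  have hmean : ∑ a, π s a * (η * M.Adv π s a / (1 - M.γ)) = 0 := by
    rw [← mul_zero (η / (1 - M.γ)), ← advPol_self hM hπ s, advPol, mul_sum]
    exact sum_congr rfl fun a _ => by ring
  calc (1 : ℝ) = ∑ a, π s a * (η * M.Adv π s a / (1 - M.γ) + 1) := by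
        simp only [mul_add, mul_one, sum_add_distrib, hmean, hπ.2 s, zero_add]
    _ ≤ M.npgNormalizer η π s :=
        sum_le_sum fun a _ => mul_le_mul_of_nonneg_left (Real.add_one_le_exp _) (hπ.1 s a)

lemma Adv_eq_log_npgUpdate (hM : M.Valid) (hη : η ≠ 0) {s : M.S} (hpos : ∀ a, 0 < π s a)
    (a : M.A) :
    M.Adv π s a = (1 - M.γ) / η * (Real.log (M.npgUpdate η π s a) - Real.log (π s a) +
      Real.log (M.npgNormalizer η π s)) := by
  have : Nonempty M.A := ⟨a⟩
  have hγ : 1 - M.γ ≠ 0 := (sub_pos.2 hM.gamma_lt_one).ne'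
  rw [npgUpdate, Real.log_div (mul_pos (hpos a) (Real.exp_pos _)).ne'
    (npgNormalizer_pos hpos).ne', Real.log_mul (hpos a).ne' (Real.exp_pos _).ne', Real.log_exp]
  field_simp
  ring

/-- The mirror-descent identity. -/
lemma advPol_npgUpdate (hM : M.Valid) (hη : η ≠ 0) {s : M.S} (hpos : ∀ a, 0 < π s a)
    {p : M.S → M.A → ℝ} (hp : ∑ a, p s a = 1) :
    M.advPol p π s = (1 - M.γ) / η * (discreteKL (p s) (π s) -
      discreteKL (p s) (M.npgUpdate η π s) + Real.log (M.npgNormalizer η π s)) := by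
  calc M.advPol p π s = ∑ a, (1 - M.γ) / η *
        ((p s a * (Real.log (p s a) - Real.log (π s a)) -
          p s a * (Real.log (p s a) - Real.log (M.npgUpdate η π s a))) +
          Real.log (M.npgNormalizer η π s) * p s a) :=
        sum_congr rfl fun a _ => by rw [Adv_eq_log_npgUpdate hM hη hpos a]; ring
    _ = _ := by
        rw [← mul_sum, sum_add_distrib, ← mul_sum, hp, mul_one, sum_sub_distrib]
        rfl

lemma V_npgUpdate_sub_V_ge (hM : M.Valid) (hη : 0 < η) (hπ : M.IsPolicy π)
    (hpos : ∀ s a, 0 < π s a) (s : M.S) :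
    (1 - M.γ) / η * Real.log (M.npgNormalizer η π s) ≤ M.V (M.npgUpdate η π) s - M.V π s := by
  have hπ' := isPolicy_npgUpdate (η := η) hπ hpos
  have hc : 0 ≤ (1 - M.γ) / η := div_nonneg (sub_nonneg.2 hM.gamma_lt_one.le) hη.le
  have hgain : ∀ s, (1 - M.γ) / η * Real.log (M.npgNormalizer η π s) ≤
      M.advPol (M.npgUpdate η π) π s := fun s => by
    rw [advPol_npgUpdate hM hη.ne' (hpos s) (hπ'.2 s), discreteKL_self, sub_zero]
    exact mul_le_mul_of_nonneg_left
      (le_add_of_nonneg_left (discreteKL_nonneg ⟨hπ'.1 s, hπ'.2 s⟩ (hπ.2 s) (hpos s))) hc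
  refine (hgain s).trans (advPol_le_V_sub_V hM hπ' (fun s => ?_) s)
  exact (mul_nonneg hc (Real.log_nonneg (one_le_npgNormalizer hM hπ s))).trans (hgain s)

lemma V_le_V_npgUpdate (hM : M.Valid) (hη : 0 < η) (hπ : M.IsPolicy π)
    (hpos : ∀ s a, 0 < π s a) (s : M.S) : M.V π s ≤ M.V (M.npgUpdate η π) s := by
  have hc : 0 ≤ (1 - M.γ) / η := div_nonneg (sub_nonneg.2 hM.gamma_lt_one.le) hη.le
  have := mul_nonneg hc (Real.log_nonneg (one_le_npgNormalizer (η := η) hM hπ s))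
  linarith [V_npgUpdate_sub_V_ge hM hη hπ hpos s]

/-- Lyapunov function of the mirror-descent analysis. -/
noncomputable def npgPotential (η : ℝ) (p : M.S → M.A → ℝ) (d : M.S → ℝ)
    (π : M.S → M.A → ℝ) : ℝ :=
  ∑ s, d s * ((1 - M.γ) / η * discreteKL (p s) (π s) - M.V π s)

lemma one_sub_gamma_mul_Vd_sub_Vd_le_npgPotential_sub (hM : M.Valid) (hη : 0 < η)
    {p : M.S → M.A → ℝ} (hp : M.IsPolicy p) (hπ : M.IsPolicy π) (hpos : ∀ s a, 0 < π s a)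
    {ρ : M.S → ℝ} (hρ : IsDist ρ) :
    (1 - M.γ) * (M.Vd p ρ - M.Vd π ρ) ≤
      M.npgPotential η p (M.dvisitD p ρ) π -
        M.npgPotential η p (M.dvisitD p ρ) (M.npgUpdate η π) := by
  rw [one_sub_gamma_mul_Vd_sub_Vd hM hp, npgPotential, npgPotential, ← sum_sub_distrib]
  refine sum_le_sum fun s _ => ?_
  rw [← mul_sub]
  refine mul_le_mul_of_nonneg_left ?_ ((isDist_dvisitD hM hp hρ).1 s)
  rw [advPol_npgUpdate hM hη.ne' (hpos s) (hp.2 s)]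
  linarith [V_npgUpdate_sub_V_ge hM hη hπ hpos s]

lemma npgPotential_uniform_sub_le (hM : M.Valid) (hη : 0 < η) {p : M.S → M.A → ℝ}
    (hp : M.IsPolicy p) {d : M.S → ℝ} (hd : IsDist d) {π₀ : M.S → M.A → ℝ}
    (h0 : ∀ s a, π₀ s a = 1 / (Fintype.card M.A : ℝ)) (hπ : M.IsPolicy π)
    (hpos : ∀ s a, 0 < π s a) :
    M.npgPotential η p d π₀ - M.npgPotential η p d π ≤
      (1 - M.γ) / η * Real.log (Fintype.card M.A) + (1 - M.γ)⁻¹ := by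
  have hc : 0 ≤ (1 - M.γ) / η := div_nonneg (sub_nonneg.2 hM.gamma_lt_one.le) hη.le
  rw [npgPotential, npgPotential, ← sum_sub_distrib]
  simp only [← mul_sub]
  refine hd.sum_mul_le fun s => ?_
  have hKL₀ : discreteKL (p s) (π₀ s) ≤ Real.log (Fintype.card M.A) := by
    rw [show π₀ s = fun _ => 1 / (Fintype.card M.A : ℝ) from funext (h0 s)]
    exact discreteKL_uniform_le ⟨hp.1 s, hp.2 s⟩
  have hKL := discreteKL_nonneg ⟨hp.1 s, hp.2 s⟩ (hπ.2 s) (hpos s)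
  have hV₀ := V_nonneg hM (π := π₀) (fun s a => by rw [h0]; positivity) s
  linarith [V_le_inv_one_sub hM hπ s, mul_le_mul_of_nonneg_left hKL₀ hc, mul_nonneg hc hKL]

end NPGStep

section NPGIteration

variable {η : ℝ} {π : ℕ → M.S → M.A → ℝ}

lemma npg_iterate_pos (h0 : ∀ s a, π 0 s a = 1 / (Fintype.card M.A : ℝ))
    (hstep : ∀ t, π (t + 1) = M.npgUpdate η (π t)) (t : ℕ) (s : M.S) (a : M.A) :
    0 < π t s a := by
  induction t generalizing s a with
  | zero =>
    have : Nonempty M.A := ⟨a⟩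
    rw [h0]
    positivity
  | succ t ih => exact hstep t ▸ npgUpdate_pos (ih s) a

lemma npg_iterate_isPolicy [Nonempty M.A] (h0 : ∀ s a, π 0 s a = 1 / (Fintype.card M.A : ℝ))
    (hstep : ∀ t, π (t + 1) = M.npgUpdate η (π t)) (t : ℕ) : M.IsPolicy (π t) := by
  induction t with
  | zero => exact ⟨fun s a => (npg_iterate_pos h0 hstep 0 s a).le, fun s => by simp [h0]⟩
  | succ t ih => exact hstep t ▸ isPolicy_npgUpdate ih (npg_iterate_pos h0 hstep t)

theorem npg_mul_suboptimality_le [Nonempty M.A] (hM : M.Valid) (hη : 0 < η)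
    (h0 : ∀ s a, π 0 s a = 1 / (Fintype.card M.A : ℝ))
    (hstep : ∀ t, π (t + 1) = M.npgUpdate η (π t)) {ρ : M.S → ℝ} (hρ : IsDist ρ)
    {p : M.S → M.A → ℝ} (hp : M.IsPolicy p) (T : ℕ) :
    (1 - M.γ) * T * (M.Vd p ρ - M.Vd (π T) ρ) ≤
      (1 - M.γ) / η * Real.log (Fintype.card M.A) + (1 - M.γ)⁻¹ := by
  have hpol := npg_iterate_isPolicy h0 hstep
  have hpos := npg_iterate_pos h0 hstep
  set Φ : ℕ → ℝ := fun t => M.npgPotential η p (M.dvisitD p ρ) (π t)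
  have hmono : Antitone fun t => (1 - M.γ) * (M.Vd p ρ - M.Vd (π t) ρ) := by
    refine antitone_nat_of_succ_le fun t => ?_
    have hV : M.Vd (π t) ρ ≤ M.Vd (π (t + 1)) ρ := sum_le_sum fun s _ =>
      mul_le_mul_of_nonneg_left (hstep t ▸ V_le_V_npgUpdate hM hη (hpol t) (hpos t) s) (hρ.1 s)
    exact mul_le_mul_of_nonneg_left (sub_le_sub_left hV _) (sub_nonneg.2 hM.gamma_lt_one.le)
  have hdesc : ∀ t, (1 - M.γ) * (M.Vd p ρ - M.Vd (π t) ρ) ≤ Φ t - Φ (t + 1) := fun t => by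
    simp only [Φ, hstep t]
    exact one_sub_gamma_mul_Vd_sub_Vd_le_npgPotential_sub hM hη hp (hpol t) (hpos t) hρ
  calc (1 - M.γ) * T * (M.Vd p ρ - M.Vd (π T) ρ)
      = T * ((1 - M.γ) * (M.Vd p ρ - M.Vd (π T) ρ)) := by ring
    _ ≤ Φ 0 - Φ T := hmono.natCast_mul_le_sub hdesc T
    _ ≤ _ := npgPotential_uniform_sub_le hM hη hp (isDist_dvisitD hM hp hρ) h0 (hpol T) (hpos T)

theorem npg_suboptimality_le [Nonempty M.A] (hM : M.Valid) (hη : 0 < η)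
    (h0 : ∀ s a, π 0 s a = 1 / (Fintype.card M.A : ℝ))
    (hstep : ∀ t, π (t + 1) = M.npgUpdate η (π t)) {ρ : M.S → ℝ} (hρ : IsDist ρ)
    {p : M.S → M.A → ℝ} (hp : M.IsPolicy p) {T : ℕ} (hT : 0 < T) :
    M.Vd p ρ - M.Vd (π T) ρ ≤
      Real.log (Fintype.card M.A) / (η * T) + 1 / ((1 - M.γ) ^ 2 * T) := by
  have hγ : 0 < 1 - M.γ := sub_pos.2 hM.gamma_lt_one
  have hT' : (0 : ℝ) < T := Nat.cast_pos.2 hT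
  have hscale : (Real.log (Fintype.card M.A) / (η * T) + 1 / ((1 - M.γ) ^ 2 * T)) *
      ((1 - M.γ) * T) = (1 - M.γ) / η * Real.log (Fintype.card M.A) + (1 - M.γ)⁻¹ := by
    field_simp
  refine le_of_mul_le_mul_right ?_ (mul_pos hγ hT')
  rw [hscale]
  linarith [npg_mul_suboptimality_le hM hη h0 hstep hρ hp T]

end NPGIteration

end FinMDP

/-- **Global convergence of natural policy gradient in the tabular case.** -/
theorem npg_tabular_global_convergence (M : FinMDP) (hM : M.Valid)
    (η : ℝ) (hη : 0 < η)
    (π : ℕ → M.S → M.A → ℝ)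
    (h0 : ∀ s a, π 0 s a = 1 / (Fintype.card M.A : ℝ))
    (hupd : ∀ t s a, π (t + 1) s a =
        π t s a * Real.exp (η * M.Adv (π t) s a / (1 - M.γ)) /
          ∑ a', π t s a' * Real.exp (η * M.Adv (π t) s a' / (1 - M.γ)))
    (ρ : M.S → ℝ) (hρ : IsDist ρ) (T : ℕ) (hT : 1 ≤ T) :
    (M.Vd (π T) ρ ≥
        (⨆ p : {p : M.S → M.A → ℝ // M.IsPolicy p}, M.Vd p.1 ρ) -
          Real.log (Fintype.card M.A) / (η * T) - 1 / ((1 - M.γ) ^ 2 * T)) ∧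
      (η ≥ (1 - M.γ) ^ 2 * Real.log (Fintype.card M.A) →
        ((⨆ p : {p : M.S → M.A → ℝ // M.IsPolicy p}, M.Vd p.1 ρ) - M.Vd (π T) ρ ≤
            2 / ((1 - M.γ) ^ 2 * T)) ∧
          ∀ ε : ℝ, 0 < ε → (T : ℝ) ≥ 2 / ((1 - M.γ) ^ 2 * ε) →
            (⨆ p : {p : M.S → M.A → ℝ // M.IsPolicy p}, M.Vd p.1 ρ) - M.Vd (π T) ρ ≤ ε) := by
  have hstep : ∀ t, π (t + 1) = M.npgUpdate η (π t) := fun t => funext₂ (hupd t)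
  have hγ : 0 < 1 - M.γ := sub_pos.2 hM.gamma_lt_one
  have hT' : (0 : ℝ) < T := by exact_mod_cast hT
  have : Nonempty M.S := hρ.nonempty
  set E := Real.log (Fintype.card M.A) / (η * T) + 1 / ((1 - M.γ) ^ 2 * T)
  have hE : 0 ≤ E := add_nonneg (div_nonneg (Real.log_natCast_nonneg _) (by positivity))
    (by positivity)
  have hVT : 0 ≤ M.Vd (π T) ρ := sum_nonneg fun s _ => mul_nonneg (hρ.1 s)
    (FinMDP.V_nonneg hM (fun s a => (FinMDP.npg_iterate_pos h0 hstep T s a).le) s)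
  have hsup : (⨆ p : {p : M.S → M.A → ℝ // M.IsPolicy p}, M.Vd p.1 ρ) ≤ M.Vd (π T) ρ + E :=
    Real.iSup_le (fun p => by
      have : Nonempty M.A := p.2.nonempty_actions
      linarith [FinMDP.npg_suboptimality_le hM hη h0 hstep hρ p.2 hT])
      (add_nonneg hVT hE)
  refine ⟨by linarith, fun hηK => ?_⟩
  have hE2 : E ≤ 2 / ((1 - M.γ) ^ 2 * T) := by
    have : Real.log (Fintype.card M.A) / (η * T) ≤ 1 / ((1 - M.γ) ^ 2 * T) := by
      rw [div_le_div_iff₀ (by positivity) (by positivity)]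
      linarith [mul_le_mul_of_nonneg_right hηK hT'.le]
    linarith [show (2 : ℝ) / ((1 - M.γ) ^ 2 * T) = 2 * (1 / ((1 - M.γ) ^ 2 * T)) by ring]
  refine ⟨by linarith, fun ε hε hTε => ?_⟩
  have : 2 / ((1 - M.γ) ^ 2 * T) ≤ ε := by
    rw [ge_iff_le, div_le_iff₀ (by positivity)] at hTε
    rw [div_le_iff₀ (by positivity)]
    linarith
  linarith
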